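/- For ϑ = (ϑ₁, ϑ₂, ϑ₃) ∈ ℝ³ write c_j = cos ϑ_j, c₀ = c₁ + c₂ + c₃, η = c₁c₂ + c₁c₃ + c₂c₃, and define the Hermitian 4×4 matrix Δ(ϑ) with diagonal entries 4, 4, 4, 18 − 2c₀, with Δ(ϑ)₁₄ = −(1 + e^{iϑ₁})(1 + e^{iϑ₂}), Δ(ϑ)₂₄ = −(1 + e^{iϑ₁})(1 + e^{iϑ₃}), Δ(ϑ)₃₄ = −(1 + e^{iϑ₂})(1 + e^{iϑ₃}), with Δ(ϑ)₄₁, Δ(ϑ)₄₂, Δ(ϑ)₄₃ their complex conjugates, and all remaining off-diagonal entries 0. Then: (a) for every ϑ ∈ ℝ³ and every λ ∈ ℂ, det(Δ(ϑ) − λ·I) = (4 − λ)² (λ² − 2(11 − c₀)λ + 4(15 − η − 4c₀)); in particular 4 is an eigenvalue of Δ(ϑ) of multiplicity at least 2 for every ϑ; (b) { λ ∈ ℝ : ∃ ϑ ∈ ℝ³, det(Δ(ϑ) − λ·I) = 0 } = [0, 4] ∪ [16, 24]. -/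

import Mathlib

set_option maxRecDepth 8000
set_option maxHeartbeats 1000000



open Matrix Complex

/-- The Floquet fiber matrix of the Laplacian on the face-centered cubic lattice. -/
noncomputable def fccFiber (ϑ : Fin 3 → ℝ) : Matrix (Fin 4) (Fin 4) ℂ :=
  !![(4 : ℂ), 0, 0,
       -((1 + Complex.exp (Complex.I * ϑ 0)) * (1 + Complex.exp (Complex.I * ϑ 1)));
     0, (4 : ℂ), 0,
       -((1 + Complex.exp (Complex.I * ϑ 0)) * (1 + Complex.exp (Complex.I * ϑ 2)));
     0, 0, (4 : ℂ),
       -((1 + Complex.exp (Complex.I * ϑ 1)) * (1 + Complex.exp (Complex.I * ϑ 2)));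
     -((1 + Complex.exp (-Complex.I * ϑ 0)) * (1 + Complex.exp (-Complex.I * ϑ 1))),
       -((1 + Complex.exp (-Complex.I * ϑ 0)) * (1 + Complex.exp (-Complex.I * ϑ 2))),
       -((1 + Complex.exp (-Complex.I * ϑ 1)) * (1 + Complex.exp (-Complex.I * ϑ 2))),
       ((18 - 2 * (Real.cos (ϑ 0) + Real.cos (ϑ 1) + Real.cos (ϑ 2))) : ℝ)]

section aux

theorem detFin4 {R : Type*} [CommRing R] (M : Matrix (Fin 4) (Fin 4) R) :
    M.det =
      M 0 0 * M 1 1 * M 2 2 * M 3 3 - M 0 0 * M 1 1 * M 2 3 * M 3 2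
      - M 0 0 * M 1 2 * M 2 1 * M 3 3 + M 0 0 * M 1 2 * M 2 3 * M 3 1
      + M 0 0 * M 1 3 * M 2 1 * M 3 2 - M 0 0 * M 1 3 * M 2 2 * M 3 1
      - M 0 1 * M 1 0 * M 2 2 * M 3 3 + M 0 1 * M 1 0 * M 2 3 * M 3 2
      + M 0 1 * M 1 2 * M 2 0 * M 3 3 - M 0 1 * M 1 2 * M 2 3 * M 3 0
      - M 0 1 * M 1 3 * M 2 0 * M 3 2 + M 0 1 * M 1 3 * M 2 2 * M 3 0
      + M 0 2 * M 1 0 * M 2 1 * M 3 3 - M 0 2 * M 1 0 * M 2 3 * M 3 1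
      - M 0 2 * M 1 1 * M 2 0 * M 3 3 + M 0 2 * M 1 1 * M 2 3 * M 3 0
      + M 0 2 * M 1 3 * M 2 0 * M 3 1 - M 0 2 * M 1 3 * M 2 1 * M 3 0
      - M 0 3 * M 1 0 * M 2 1 * M 3 2 + M 0 3 * M 1 0 * M 2 2 * M 3 1
      + M 0 3 * M 1 1 * M 2 0 * M 3 2 - M 0 3 * M 1 1 * M 2 2 * M 3 0
      - M 0 3 * M 1 2 * M 2 0 * M 3 1 + M 0 3 * M 1 2 * M 2 1 * M 3 0 := by
  have e1 : (Fin.succ 2 : Fin 4) = 3 := rfl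
  have e2 : Fin.succAbove (2 : Fin 4) (2 : Fin 3) = (3 : Fin 4) := rfl
  have e3 : Fin.succAbove (1 : Fin 4) (2 : Fin 3) = (3 : Fin 4) := rfl
  have e4 : (Fin.castSucc 2 : Fin 4) = 2 := rfl
  have e5 : Fin.succAbove (3 : Fin 4) (2 : Fin 3) = (2 : Fin 4) := rfl
  simp [Matrix.det_succ_row_zero, Fin.sum_univ_succ]
  simp only [e1, e2, e3, e4, e5]
  ring


lemma expsum (x : ℂ) : Complex.exp (Complex.I * x) + Complex.exp (-(Complex.I * x)) = 2 * Complex.cos x := by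
  rw [Complex.cos]
  ring_nf

lemma expmul (x : ℂ) : Complex.exp (Complex.I * x) * Complex.exp (-(Complex.I * x)) = 1 := by
  rw [← Complex.exp_add]; ring_nf; exact Complex.exp_zero

lemma detA (ϑ : Fin 3 → ℝ) (lam : ℂ) :
        (fccFiber ϑ - lam • (1 : Matrix (Fin 4) (Fin 4) ℂ)).det =
          (4 - lam) ^ 2 *
            (lam ^ 2 -
              2 * ((11 : ℂ) - ((Real.cos (ϑ 0) + Real.cos (ϑ 1) + Real.cos (ϑ 2) : ℝ) : ℂ)) *
                lam +
              4 * ((15 : ℂ) -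
                ((Real.cos (ϑ 0) * Real.cos (ϑ 1) + Real.cos (ϑ 0) * Real.cos (ϑ 2) +
                    Real.cos (ϑ 1) * Real.cos (ϑ 2) : ℝ) : ℂ) -
                4 * ((Real.cos (ϑ 0) + Real.cos (ϑ 1) + Real.cos (ϑ 2) : ℝ) : ℂ))) := by
  have h0 := expsum (ϑ 0); have h1 := expsum (ϑ 1); have h2 := expsum (ϑ 2)
  have m0 := expmul (ϑ 0); have m1 := expmul (ϑ 1); have m2 := expmul (ϑ 2)
  rw [detFin4]
  simp [fccFiber, Matrix.sub_apply, Matrix.smul_apply, Matrix.one_apply, neg_mul,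
    Complex.ofReal_cos]
  set a0 := Complex.exp (Complex.I * (ϑ 0 : ℂ))
  set a1 := Complex.exp (Complex.I * (ϑ 1 : ℂ))
  set a2 := Complex.exp (Complex.I * (ϑ 2 : ℂ))
  set b0 := Complex.exp (-(Complex.I * (ϑ 0 : ℂ)))
  set b1 := Complex.exp (-(Complex.I * (ϑ 1 : ℂ)))
  set b2 := Complex.exp (-(Complex.I * (ϑ 2 : ℂ)))
  set c0 := Complex.cos ((ϑ 0 : ℝ) : ℂ)
  set c1 := Complex.cos ((ϑ 1 : ℝ) : ℂ)
  set c2 := Complex.cos ((ϑ 2 : ℝ) : ℂ)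
  linear_combination (-(4-lam)^2) * (
    ((1+a1)*(1+b1) + (1+a2)*(1+b2)) * (m0 + h0) +
    ((2+2*c0) + (1+a2)*(1+b2)) * (m1 + h1) +
    ((2+2*c0) + (2+2*c1)) * (m2 + h2))


lemma partB (ϑ : Fin 3 → ℝ) :
    2 ≤ Module.finrank ℂ
          (LinearMap.ker (Matrix.toLin'
            (fccFiber ϑ - (4 : ℂ) • (1 : Matrix (Fin 4) (Fin 4) ℂ)))) := by
  set M := fccFiber ϑ - (4 : ℂ) • (1 : Matrix (Fin 4) (Fin 4) ℂ) with hM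
  set u : Fin 4 → ℂ := fun i => if i = 3 then 1 else 0 with hu
  set v : Fin 4 → ℂ := fun i => M i 3 with hv
  have hrange : LinearMap.range (Matrix.toLin' M) ≤ Submodule.span ℂ (Set.range ![u, v]) := by
    rintro y ⟨x, rfl⟩
    have hx : Matrix.toLin' M x =
        (M 3 0 * x 0 + M 3 1 * x 1 + M 3 2 * x 2) • u + x 3 • v := by
      rw [Matrix.toLin'_apply]
      funext i
      have e1 : (Fin.succ 2 : Fin 4) = 3 := rfl
      fin_cases i <;>
        simp [hM, hu, hv, fccFiber, Matrix.mulVec, dotProduct, Fin.sum_univ_succ,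
          Matrix.sub_apply, Matrix.smul_apply, Matrix.one_apply, e1] <;> ring
    rw [hx]
    exact Submodule.add_mem _
      (Submodule.smul_mem _ _ (Submodule.subset_span ⟨0, rfl⟩))
      (Submodule.smul_mem _ _ (Submodule.subset_span ⟨1, rfl⟩))
  have h1 : Module.finrank ℂ (LinearMap.range (Matrix.toLin' M)) ≤ 2 := by
    refine le_trans (Submodule.finrank_mono hrange) ?_
    have := finrank_range_le_card (R := ℂ) ![u, v]
    simpa [Set.finrank] using this
  have h2 := LinearMap.finrank_range_add_finrank_ker (Matrix.toLin' M)
  rw [Module.finrank_fin_fun ℂ] at h2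
  omega

lemma quadRoots (x c0 c1 c2 : ℝ) (h0 : c0 ∈ Set.Icc (-1:ℝ) 1) (h1 : c1 ∈ Set.Icc (-1:ℝ) 1)
    (h2 : c2 ∈ Set.Icc (-1:ℝ) 1)
    (hq : x^2 - 2*(11 - (c0+c1+c2))*x + 4*(15 - (c0*c1+c0*c2+c1*c2) - 4*(c0+c1+c2)) = 0) :
    x ∈ Set.Icc (0:ℝ) 4 ∪ Set.Icc (16:ℝ) 24 := by
  obtain ⟨h0l, h0r⟩ := h0; obtain ⟨h1l, h1r⟩ := h1; obtain ⟨h2l, h2r⟩ := h2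
  have p01a : (1 - c0) * (1 - c1) ≥ 0 := by nlinarith
  have p01b : (1 + c0) * (1 + c1) ≥ 0 := by nlinarith
  have p01c : (1 - c0) * (1 + c1) ≥ 0 := by nlinarith
  have p01d : (1 + c0) * (1 - c1) ≥ 0 := by nlinarith
  have p02a : (1 - c0) * (1 - c2) ≥ 0 := by nlinarith
  have p02b : (1 + c0) * (1 + c2) ≥ 0 := by nlinarith
  have p02c : (1 - c0) * (1 + c2) ≥ 0 := by nlinarith
  have p02d : (1 + c0) * (1 - c2) ≥ 0 := by nlinarith
  have p12a : (1 - c1) * (1 - c2) ≥ 0 := by nlinarith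
  have p12b : (1 + c1) * (1 + c2) ≥ 0 := by nlinarith
  have p12c : (1 - c1) * (1 + c2) ≥ 0 := by nlinarith
  have p12d : (1 + c1) * (1 - c2) ≥ 0 := by nlinarith
  have hq0 : 15 - (c0*c1+c0*c2+c1*c2) - 4*(c0+c1+c2) ≥ 0 := by nlinarith
  have hq4 : 3 + 2*(c0+c1+c2) + (c0*c1+c0*c2+c1*c2) ≥ 0 := by nlinarith
  have hq16 : 9 - 4*(c0+c1+c2) + (c0*c1+c0*c2+c1*c2) ≥ 0 := by nlinarith
  have hq24 : 27 + 8*(c0+c1+c2) - (c0*c1+c0*c2+c1*c2) ≥ 0 := by nlinarith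
  rcases le_or_gt x 4 with h4 | h4
  · left
    refine ⟨?_, h4⟩
    by_contra hx
    push_neg at hx
    nlinarith [sq_nonneg x, mul_nonneg (show (0:ℝ) ≤ 11 - (c0+c1+c2) by linarith)
      (show (0:ℝ) ≤ -x by linarith)]
  · right
    constructor
    · by_contra h16
      push_neg at h16
      nlinarith [mul_nonneg (show (0:ℝ) ≤ 16 - x by linarith) hq4,
        mul_nonneg (show (0:ℝ) ≤ x - 4 by linarith) hq16,
        mul_pos (show (0:ℝ) < x - 4 by linarith) (show (0:ℝ) < 16 - x by linarith)]
    · by_contra h24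
      push_neg at h24
      nlinarith [mul_pos (show (0:ℝ) < x - 24 by linarith)
        (show (0:ℝ) < x + 2 + 2*(c0+c1+c2) by nlinarith)]

lemma partC :
    {x : ℝ | ∃ ϑ : Fin 3 → ℝ,
        (fccFiber ϑ - (x : ℂ) • (1 : Matrix (Fin 4) (Fin 4) ℂ)).det = 0} =
      Set.Icc (0 : ℝ) 4 ∪ Set.Icc (16 : ℝ) 24 := by
  ext x
  simp only [Set.mem_setOf_eq]
  constructor
  · rintro ⟨ϑ, hdet⟩
    rw [detA] at hdet
    set c0 := Real.cos (ϑ 0)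
    set c1 := Real.cos (ϑ 1)
    set c2 := Real.cos (ϑ 2)
    have hre : ((4 - x)^2 * (x^2 - 2*(11 - (c0+c1+c2))*x
        + 4*(15 - (c0*c1+c0*c2+c1*c2) - 4*(c0+c1+c2))) : ℝ) = 0 := by
      have : (((4 - x)^2 * (x^2 - 2*(11 - (c0+c1+c2))*x
          + 4*(15 - (c0*c1+c0*c2+c1*c2) - 4*(c0+c1+c2))) : ℝ) : ℂ) = 0 := by
        rw [← hdet]; push_cast; ring
      exact_mod_cast this
    rcases mul_eq_zero.1 hre with h | h
    · have : x = 4 := by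
        have := pow_eq_zero_iff (n := 2) (by norm_num) |>.1 h
        linarith [sub_eq_zero.1 this]
      exact Or.inl ⟨by linarith, by linarith⟩
    · exact quadRoots x c0 c1 c2 ⟨Real.neg_one_le_cos _, Real.cos_le_one _⟩
        ⟨Real.neg_one_le_cos _, Real.cos_le_one _⟩ ⟨Real.neg_one_le_cos _, Real.cos_le_one _⟩ h
  · intro hx
    set g : ℝ → ℝ := fun t => x^2 - 2*(11 - 3*t)*x + 4*(15 - 3*t^2 - 12*t) with hg
    have hcont : ContinuousOn g (Set.Icc (-1:ℝ) 1) := by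
      apply Continuous.continuousOn
      fun_prop
    have key : ∃ t ∈ Set.Icc (-1:ℝ) 1, g t = 0 := by
      rcases hx with hx | hx
      · obtain ⟨hx0, hx4⟩ := hx
        have h1 : g 1 ≤ 0 := by simp only [hg]; nlinarith
        have hm1 : 0 ≤ g (-1) := by simp only [hg]; nlinarith
        have := intermediate_value_Icc' (by norm_num : (-1:ℝ) ≤ 1) hcont
        obtain ⟨t, ht, hgt⟩ := this ⟨h1, hm1⟩
        exact ⟨t, ht, hgt⟩
      · obtain ⟨hx0, hx4⟩ := hx
        have h1 : 0 ≤ g 1 := by simp only [hg]; nlinarith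
        have hm1 : g (-1) ≤ 0 := by simp only [hg]; nlinarith
        have := intermediate_value_Icc (by norm_num : (-1:ℝ) ≤ 1) hcont
        obtain ⟨t, ht, hgt⟩ := this ⟨hm1, h1⟩
        exact ⟨t, ht, hgt⟩
    obtain ⟨t, ht, hgt⟩ := key
    refine ⟨fun _ => Real.arccos t, ?_⟩
    rw [detA]
    have hc : Real.cos (Real.arccos t) = t := Real.cos_arccos ht.1 ht.2
    rw [hc]
    have : ((x:ℂ)^2 - 2*((11:ℂ) - ((t + t + t : ℝ) : ℂ))*(x:ℂ)
        + 4*((15:ℂ) - ((t*t + t*t + t*t : ℝ):ℂ) - 4*((t + t + t : ℝ):ℂ))) = ((g t : ℝ) : ℂ) := by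
      simp only [hg]; push_cast; ring
    rw [this, hgt]
    simp

end aux

/-- (a) the characteristic determinant of the FCC fiber matrix factors as
`(4 − λ)²(λ² − 2(11 − c₀)λ + 4(15 − η − 4c₀))`; in particular `4` is an eigenvalue of
multiplicity at least `2` for every `ϑ`; (b) the spectrum is `[0, 4] ∪ [16, 24]`. -/
theorem fcc_spectrum :
    (∀ (ϑ : Fin 3 → ℝ) (lam : ℂ),
        (fccFiber ϑ - lam • (1 : Matrix (Fin 4) (Fin 4) ℂ)).det =
          (4 - lam) ^ 2 *
            (lam ^ 2 -
              2 * ((11 : ℂ) - ((Real.cos (ϑ 0) + Real.cos (ϑ 1) + Real.cos (ϑ 2) : ℝ) : ℂ)) *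
                lam +
              4 * ((15 : ℂ) -
                ((Real.cos (ϑ 0) * Real.cos (ϑ 1) + Real.cos (ϑ 0) * Real.cos (ϑ 2) +
                    Real.cos (ϑ 1) * Real.cos (ϑ 2) : ℝ) : ℂ) -
                4 * ((Real.cos (ϑ 0) + Real.cos (ϑ 1) + Real.cos (ϑ 2) : ℝ) : ℂ)))) ∧
    (∀ ϑ : Fin 3 → ℝ,
        2 ≤ Module.finrank ℂ
          (LinearMap.ker (Matrix.toLin'
            (fccFiber ϑ - (4 : ℂ) • (1 : Matrix (Fin 4) (Fin 4) ℂ))))) ∧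
    {x : ℝ | ∃ ϑ : Fin 3 → ℝ,
        (fccFiber ϑ - (x : ℂ) • (1 : Matrix (Fin 4) (Fin 4) ℂ)).det = 0} =
      Set.Icc (0 : ℝ) 4 ∪ Set.Icc (16 : ℝ) 24 :=
  ⟨detA, partB, partC⟩
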